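/- Let n ≥ 1, T ≥ 1, N₀ > 0, let μ ∈ ℂ^T, let μ̃ : ℝⁿ → ℂ^T be twice continuously differentiable, and let η₀ ∈ ℝⁿ. Define the assumed log-likelihood ℓ(y, η) = −T·log(π N₀) − ‖y − μ̃(η)‖²/N₀ and ε = μ − μ̃(η₀). Then for all standard basis vectors eᵢ, eⱼ of ℝⁿ, ∫ D²_η ℓ(y, ·)(η₀)(eᵢ, eⱼ) dP_μ(y) = (2/N₀)·Re( ⟨ε, ∂ᵢ∂ⱼμ̃(η₀)⟩ − ⟨∂ᵢμ̃(η₀), ∂ⱼμ̃(η₀)⟩ ). -/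

import Mathlib

open MeasureTheory ProbabilityTheory
open scoped ComplexConjugate

/-- The complex Gaussian measure on `ℂ` with mean `m` and variance `N₀`: the real and imaginary
parts are independent real Gaussians with means `m.re`, `m.im` and common variance `N₀/2`. -/
noncomputable def complexGaussian (m : ℂ) (N0 : ℝ) : Measure ℂ :=
  ((gaussianReal m.re (N0 / 2).toNNReal).prod
    (gaussianReal m.im (N0 / 2).toNNReal)).map Complex.measurableEquivRealProd.symm

/-- The complex Gaussian product measure `P_μ` on `ℂ^T`. -/
noncomputable def gaussianPi (T : ℕ) (μ : Fin T → ℂ) (N0 : ℝ) : Measure (Fin T → ℂ) :=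
  Measure.pi fun t => complexGaussian (μ t) N0

/-- The Hermitian inner product `⟨a,b⟩ = ∑ t, conj (a t) * b t` on `ℂ^T`. -/
noncomputable def hip {T : ℕ} (a b : Fin T → ℂ) : ℂ := ∑ t, conj (a t) * b t

/-- The assumed log-likelihood `ℓ(y, η) = −T·log(π N₀) − ‖y − μ̃(η)‖²/N₀`. -/
noncomputable def loglik {n T : ℕ} (N0 : ℝ) (μtil : (Fin n → ℝ) → Fin T → ℂ)
    (y : Fin T → ℂ) (η : Fin n → ℝ) : ℝ :=
  -(T : ℝ) * Real.log (Real.pi * N0) - (∑ t, Complex.normSq (y t - μtil η t)) / N0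

/-!
`ℓ(y, ·)` is a constant plus the continuous bilinear form `-(1/N₀) Re⟨·,·⟩` evaluated at
`(y - μ̃ η, y - μ̃ η)`, so the product rule for bilinear maps, applied twice, gives the Hessian
`(2/N₀) (Re⟨y - μ̃ η₀, ∂ᵢ∂ⱼμ̃⟩ - Re⟨∂ᵢμ̃, ∂ⱼμ̃⟩)`. This is affine in `y` and `P_μ` has mean `μ`,
so taking the expectation amounts to replacing `y` by `μ`.
-/

namespace ContinuousLinearMap

variable {𝕜 E F G H : Type*} [NontriviallyNormedField 𝕜] [NormedAddCommGroup E] [NormedSpace 𝕜 E]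
  [NormedAddCommGroup F] [NormedSpace 𝕜 F] [NormedAddCommGroup G] [NormedSpace 𝕜 G]
  [NormedAddCommGroup H] [NormedSpace 𝕜 H]

theorem fderiv_fderiv_of_bilinear (B : F →L[𝕜] G →L[𝕜] H) {f : E → F} {g : E → G} {x : E}
    (hf : Differentiable 𝕜 f) (hg : Differentiable 𝕜 g)
    (hf' : DifferentiableAt 𝕜 (fderiv 𝕜 f) x) (hg' : DifferentiableAt 𝕜 (fderiv 𝕜 g) x)
    (v w : E) :
    fderiv 𝕜 (fderiv 𝕜 fun y => B (f y) (g y)) x v w =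
      B (fderiv 𝕜 (fderiv 𝕜 f) x v w) (g x) + B (fderiv 𝕜 f x w) (fderiv 𝕜 g x v) +
        B (fderiv 𝕜 f x v) (fderiv 𝕜 g x w) + B (f x) (fderiv 𝕜 (fderiv 𝕜 g) x v w) := by
  have hD : fderiv 𝕜 (fun y => B (f y) (g y)) =
      fun y => B.precompR E (f y) (fderiv 𝕜 g y) + B.precompL E (fderiv 𝕜 f y) (g y) :=
    funext fun y => B.fderiv_of_bilinear (hf y) (hg y)
  rw [hD, (((B.precompR E).hasFDerivAt_of_bilinear (hf x).hasFDerivAt hg'.hasFDerivAt).fun_add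
    ((B.precompL E).hasFDerivAt_of_bilinear hf'.hasFDerivAt (hg x).hasFDerivAt)).fderiv]
  simp only [precompR_apply, compL_apply, add_apply, comp_apply, precompL_apply]
  abel

end ContinuousLinearMap

noncomputable def reHipCLM (T : ℕ) : (Fin T → ℂ) →L[ℝ] (Fin T → ℂ) →L[ℝ] ℝ :=
  ∑ t, (innerSL ℝ).bilinearComp (ContinuousLinearMap.proj t) (ContinuousLinearMap.proj t)

lemma reHipCLM_apply {T : ℕ} (a b : Fin T → ℂ) : reHipCLM T a b = (hip a b).re := by
  simp [reHipCLM, hip, Complex.inner, mul_comm]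

lemma reHipCLM_comm {T : ℕ} (a b : Fin T → ℂ) : reHipCLM T a b = reHipCLM T b a := by
  simp [reHipCLM, real_inner_comm]

lemma loglik_eq {n T : ℕ} (N0 : ℝ) (μtil : (Fin n → ℝ) → Fin T → ℂ) (y : Fin T → ℂ) :
    loglik N0 μtil y = fun η => -(T : ℝ) * Real.log (Real.pi * N0) +
      (-N0⁻¹ • reHipCLM T) (y - μtil η) (y - μtil η) := by
  funext η
  simp only [loglik, smul_apply, reHipCLM_apply, hip, Pi.sub_apply,
    ← Complex.normSq_eq_conj_mul_self, ← Complex.ofReal_sum, Complex.ofReal_re, smul_eq_mul]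
  ring

lemma fderiv_fderiv_loglik {n T : ℕ} {N0 : ℝ} {μtil : (Fin n → ℝ) → Fin T → ℂ}
    (hμtil : ContDiff ℝ 2 μtil) (y : Fin T → ℂ) (η₀ v w : Fin n → ℝ) :
    fderiv ℝ (fderiv ℝ (loglik N0 μtil y)) η₀ v w =
      2 / N0 * (reHipCLM T (y - μtil η₀) (fderiv ℝ (fderiv ℝ μtil) η₀ v w) -
        reHipCLM T (fderiv ℝ μtil η₀ v) (fderiv ℝ μtil η₀ w)) := by
  have hd : Differentiable ℝ (fun η => y - μtil η) :=
    (hμtil.differentiable (by norm_num)).const_sub y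
  have hD : fderiv ℝ (fun η => y - μtil η) = fun η => -fderiv ℝ μtil η :=
    funext fun η => fderiv_const_sub y
  have hd' : DifferentiableAt ℝ (fderiv ℝ fun η => y - μtil η) η₀ := by
    rw [hD]
    exact ((hμtil.fderiv_right (m := 1) (by norm_num)).differentiable one_ne_zero η₀).neg
  have hconst : fderiv ℝ (loglik N0 μtil y) =
      fderiv ℝ fun η => (-N0⁻¹ • reHipCLM T) (y - μtil η) (y - μtil η) := by
    rw [loglik_eq]
    exact funext fun η => fderiv_const_add _
  rw [hconst, (-N0⁻¹ • reHipCLM T).fderiv_fderiv_of_bilinear hd hd hd' hd',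
    hD, fderiv_fun_neg]
  simp only [smul_apply, neg_apply, map_neg, reHipCLM_comm (fderiv ℝ μtil η₀ w),
    reHipCLM_comm (fderiv ℝ (fderiv ℝ μtil) η₀ v w), smul_eq_mul]
  ring

instance (m : ℂ) (N0 : ℝ) : IsGaussian (complexGaussian m N0) :=
  isGaussian_map_equiv Complex.equivRealProdCLM.symm

instance (T : ℕ) (μ : Fin T → ℂ) (N0 : ℝ) : IsProbabilityMeasure (gaussianPi T μ N0) := by
  unfold gaussianPi; infer_instance

lemma integral_id_complexGaussian (m : ℂ) (N0 : ℝ) : ∫ z, z ∂complexGaussian m N0 = m := by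
  have hint : Integrable (fun z : ℂ => z) (complexGaussian m N0) := IsGaussian.integrable_fun_id
  apply Complex.ext
  · rw [← RCLike.re_to_complex, ← integral_re hint, complexGaussian,
      integral_map_equiv Complex.measurableEquivRealProd.symm fun z => RCLike.re z]
    simp [integral_fun_fst (f := fun x : ℝ => x), integral_id_gaussianReal]
  · rw [← RCLike.im_to_complex, ← integral_im hint, complexGaussian,
      integral_map_equiv Complex.measurableEquivRealProd.symm fun z => RCLike.im z]
    simp [integral_fun_snd (f := fun x : ℝ => x), integral_id_gaussianReal]

lemma integrable_eval_gaussianPi (T : ℕ) (μ : Fin T → ℂ) (N0 : ℝ) (t : Fin T) :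
    Integrable (fun y : Fin T → ℂ => y t) (gaussianPi T μ N0) :=
  (measurePreserving_eval _ t).integrable_comp_of_integrable IsGaussian.integrable_fun_id

lemma integrable_id_gaussianPi (T : ℕ) (μ : Fin T → ℂ) (N0 : ℝ) :
    Integrable (fun y => y) (gaussianPi T μ N0) :=
  integrable_pi_iff.2 (integrable_eval_gaussianPi T μ N0)

lemma integral_id_gaussianPi (T : ℕ) (μ : Fin T → ℂ) (N0 : ℝ) :
    ∫ y, y ∂gaussianPi T μ N0 = μ := by
  funext t
  rw [eval_integral (integrable_eval_gaussianPi T μ N0)]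
  refine (integral_map (measurable_pi_apply (X := fun _ : Fin T => ℂ) t).aemeasurable
    aestronglyMeasurable_id).symm.trans ?_
  rw [gaussianPi, (measurePreserving_eval _ t).map_eq]
  exact integral_id_complexGaussian _ _

lemma integrable_sub_const_gaussianPi {T : ℕ} (μ : Fin T → ℂ) (N0 : ℝ) (m : Fin T → ℂ) :
    Integrable (fun y => y - m) (gaussianPi T μ N0) :=
  (integrable_id_gaussianPi T μ N0).sub (integrable_const m)

lemma integral_comp_sub_gaussianPi {T : ℕ} (μ : Fin T → ℂ) (N0 : ℝ)
    (L : (Fin T → ℂ) →L[ℝ] ℝ) (m : Fin T → ℂ) :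
    ∫ y, L (y - m) ∂gaussianPi T μ N0 = L (μ - m) := by
  rw [L.integral_comp_comm (integrable_sub_const_gaussianPi μ N0 m),
    integral_sub (integrable_id_gaussianPi T μ N0) (integrable_const m), integral_id_gaussianPi,
    integral_const, probReal_univ, one_smul]

theorem stmt7_general (n T : ℕ) (N0 : ℝ)
    (μ : Fin T → ℂ) (μtil : (Fin n → ℝ) → Fin T → ℂ) (hμtil : ContDiff ℝ 2 μtil)
    (η₀ : Fin n → ℝ) (i j : Fin n) :
    ∫ y, fderiv ℝ (fderiv ℝ (loglik N0 μtil y)) η₀ (Pi.single i 1) (Pi.single j 1)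
        ∂(gaussianPi T μ N0)
      = (2 / N0) * (hip (fun t => μ t - μtil η₀ t)
            (fderiv ℝ (fderiv ℝ μtil) η₀ (Pi.single i 1) (Pi.single j 1))
          - hip (fderiv ℝ μtil η₀ (Pi.single i 1)) (fderiv ℝ μtil η₀ (Pi.single j 1))).re := by
  set d := fderiv ℝ (fderiv ℝ μtil) η₀ (Pi.single i 1) (Pi.single j 1)
  set R := reHipCLM T (fderiv ℝ μtil η₀ (Pi.single i 1)) (fderiv ℝ μtil η₀ (Pi.single j 1)) with hR
  have hHessian : ∀ y, fderiv ℝ (fderiv ℝ (loglik N0 μtil y)) η₀ (Pi.single i 1) (Pi.single j 1) =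
      2 / N0 * ((reHipCLM T).flip d (y - μtil η₀) - R) :=
    fun y => fderiv_fderiv_loglik hμtil y η₀ _ _
  have hint :=
    ((reHipCLM T).flip d).integrable_comp (integrable_sub_const_gaussianPi μ N0 (μtil η₀))
  simp_rw [hHessian]
  rw [integral_const_mul, integral_sub hint (integrable_const R), integral_comp_sub_gaussianPi,
    integral_const, probReal_univ, one_smul, ContinuousLinearMap.flip_apply, hR, reHipCLM_apply,
    reHipCLM_apply, Complex.sub_re]
  rfl

theorem stmt7 (n T : ℕ) (hn : 1 ≤ n) (hT : 1 ≤ T) (N0 : ℝ) (hN0 : 0 < N0)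
    (μ : Fin T → ℂ) (μtil : (Fin n → ℝ) → Fin T → ℂ) (hμtil : ContDiff ℝ 2 μtil)
    (η₀ : Fin n → ℝ) (i j : Fin n) :
    ∫ y, fderiv ℝ (fderiv ℝ (loglik N0 μtil y)) η₀ (Pi.single i 1) (Pi.single j 1)
        ∂(gaussianPi T μ N0)
      = (2 / N0) * (hip (fun t => μ t - μtil η₀ t)
            (fderiv ℝ (fderiv ℝ μtil) η₀ (Pi.single i 1) (Pi.single j 1))
          - hip (fderiv ℝ μtil η₀ (Pi.single i 1)) (fderiv ℝ μtil η₀ (Pi.single j 1))).re :=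
  stmt7_general n T N0 μ μtil hμtil η₀ i j
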